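/- Let $\mathcal{A}$ be an $n\times n$ matrix function on $\Omega$ of the block form $\mathcal{A} = \begin{pmatrix}\mathcal{A}_1 & \mathcal{A}_2\tfrac{t}{|t|}\\ \tfrac{t^T}{|t|}\mathcal{A}_3 & b\,I\end{pmatrix}$. Then the operator $L = -\mathrm{div}(|t|^{d+1-n}\mathcal{A}\nabla)$ satisfies, in the sense of distributions on $\Omega$, $L = -|t|^{d+1-n}\big[\mathrm{div}_x(\mathcal{A}_1\nabla_x) + \mathrm{div}_x(\mathcal{A}_2\partial_r) + \partial_r(\mathcal{A}_3\nabla_x) + \partial_r(b\,\partial_r) + \tfrac12\sum_{i,j=d+1}^n \partial_{\varphi_{ij}}(b\,\partial_{\varphi_{ij}})\big]$. -/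

import Mathlib

/-!
The identity holds pointwise for the integrands. The mixed terms only regroup
`∑_α (t_α/|t|) ∂_α` into `∂_r`. For the `b`-term, the polarized Lagrange identity for the unit
vector `c = t/|t|` gives `∇_t u · ∇_t v = (c·∇_t u)(c·∇_t v) + ½ ∑_{ij} ∂_{φ_{ij}} u ∂_{φ_{ij}} v`.
Where `t = 0` the formulas see `t/|t| = 0`, but there `∇u = 0` since `u` is supported in `Ω`.
-/

open MeasureTheory
open scoped BigOperators

noncomputable section

/-- Partial derivative in the `x`-coordinate `i`. -/
def pdX {d m : ℕ}
    (u : EuclideanSpace ℝ (Fin d) × EuclideanSpace ℝ (Fin m) → ℝ) (i : Fin d)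
    (p : EuclideanSpace ℝ (Fin d) × EuclideanSpace ℝ (Fin m)) : ℝ :=
  fderiv ℝ u p (EuclideanSpace.single i 1, 0)

/-- Partial derivative in the `t`-coordinate `α`. -/
def pdT {d m : ℕ}
    (u : EuclideanSpace ℝ (Fin d) × EuclideanSpace ℝ (Fin m) → ℝ) (α : Fin m)
    (p : EuclideanSpace ℝ (Fin d) × EuclideanSpace ℝ (Fin m)) : ℝ :=
  fderiv ℝ u p (0, EuclideanSpace.single α 1)

/-- The radial derivative `∂_r u = ∑_α (t_α/|t|) ∂_α u`. -/
def radD {d m : ℕ}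
    (u : EuclideanSpace ℝ (Fin d) × EuclideanSpace ℝ (Fin m) → ℝ)
    (p : EuclideanSpace ℝ (Fin d) × EuclideanSpace ℝ (Fin m)) : ℝ :=
  ∑ α, (p.2 α / ‖p.2‖) * pdT u α p

/-- The angular derivative `∂_{φ_{ij}} u = -(t_i/|t|) ∂_j u + (t_j/|t|) ∂_i u`. -/
def angD {d m : ℕ} (i j : Fin m)
    (u : EuclideanSpace ℝ (Fin d) × EuclideanSpace ℝ (Fin m) → ℝ)
    (p : EuclideanSpace ℝ (Fin d) × EuclideanSpace ℝ (Fin m)) : ℝ :=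
  -(p.2 i / ‖p.2‖) * pdT u j p + (p.2 j / ‖p.2‖) * pdT u i p

theorem sum_sum_rotation_mul_rotation {R ι : Type*} [CommRing R] [Fintype ι] (c U V : ι → R) :
    ∑ i, ∑ j, (-(c i) * U j + c j * U i) * (-(c i) * V j + c j * V i)
      = 2 * ((∑ i, c i ^ 2) * ∑ i, U i * V i - (∑ i, c i * U i) * ∑ i, c i * V i) := by
  have h : ∑ i, ∑ j, (-(c i) * U j + c j * U i) * (-(c i) * V j + c j * V i)
      + (∑ i, c i * V i) * (∑ j, c j * U j) + (∑ i, c i * U i) * (∑ j, c j * V j)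
      = (∑ i, c i ^ 2) * (∑ j, U j * V j) + (∑ i, U i * V i) * (∑ j, c j ^ 2) := by
    simp only [Finset.sum_mul_sum, ← Finset.sum_add_distrib]
    exact Finset.sum_congr rfl fun i _ => Finset.sum_congr rfl fun j _ => by ring
  linear_combination h

theorem EuclideanSpace.sum_sq_div_norm_eq_one {ι : Type*} [Fintype ι] {t : EuclideanSpace ℝ ι}
    (ht : t ≠ 0) : ∑ i, (t i / ‖t‖) ^ 2 = 1 := by
  simp_rw [div_pow]
  rw [← Finset.sum_div, ← EuclideanSpace.real_norm_sq_eq, div_self (by positivity)]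

theorem sum_pdT_mul_pdT_eq_radD_add_angD {d m : ℕ}
    {u : EuclideanSpace ℝ (Fin d) × EuclideanSpace ℝ (Fin m) → ℝ}
    (v : EuclideanSpace ℝ (Fin d) × EuclideanSpace ℝ (Fin m) → ℝ)
    (hu : tsupport u ⊆ {p | p.2 ≠ 0}) (p : EuclideanSpace ℝ (Fin d) × EuclideanSpace ℝ (Fin m)) :
    ∑ α, pdT u α p * pdT v α p
      = radD u p * radD v p + 1 / 2 * ∑ i, ∑ j, angD i j u p * angD i j v p := by
  by_cases hp : p.2 = 0
  · have hdu : fderiv ℝ u p = 0 := fderiv_of_notMem_tsupport _ fun h => hu h hp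
    simp [pdT, radD, angD, hdu]
  · have h := sum_sum_rotation_mul_rotation (fun α => p.2 α / ‖p.2‖) (pdT u · p) (pdT v · p)
    rw [EuclideanSpace.sum_sq_div_norm_eq_one hp] at h
    simp only [radD, angD]
    linear_combination (-1 / 2 : ℝ) * h

theorem stmt_19_general {d n : ℕ}
    (A1 : EuclideanSpace ℝ (Fin d) × EuclideanSpace ℝ (Fin (n - d)) →
      Fin d → Fin d → ℝ)
    (A2 A3 : EuclideanSpace ℝ (Fin d) × EuclideanSpace ℝ (Fin (n - d)) → Fin d → ℝ)
    (b : EuclideanSpace ℝ (Fin d) × EuclideanSpace ℝ (Fin (n - d)) → ℝ)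
    (u v : EuclideanSpace ℝ (Fin d) × EuclideanSpace ℝ (Fin (n - d)) → ℝ)
    (huΩ : tsupport u ⊆
      {p : EuclideanSpace ℝ (Fin d) × EuclideanSpace ℝ (Fin (n - d)) | p.2 ≠ 0}) :
    (∫ p : EuclideanSpace ℝ (Fin d) × EuclideanSpace ℝ (Fin (n - d)),
        ((∑ i, ∑ k, A1 p i k * pdX u k p * pdX v i p)
          + (∑ i, ∑ α, A2 p i * (p.2 α / ‖p.2‖) * pdT u α p * pdX v i p)
          + (∑ α, ∑ k, (p.2 α / ‖p.2‖) * A3 p k * pdX u k p * pdT v α p)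
          + b p * ∑ α, pdT u α p * pdT v α p)
          * ‖p.2‖ ^ ((d : ℤ) + 1 - (n : ℤ)))
      = ∫ p : EuclideanSpace ℝ (Fin d) × EuclideanSpace ℝ (Fin (n - d)),
          ((∑ i, ∑ k, A1 p i k * pdX u k p * pdX v i p)
            + (∑ i, A2 p i * radD u p * pdX v i p)
            + (∑ k, A3 p k * pdX u k p) * radD v p
            + b p * (radD u p * radD v p)
            + (1 / 2) * ∑ i, ∑ j, b p * angD i j u p * angD i j v p)
            * ‖p.2‖ ^ ((d : ℤ) + 1 - (n : ℤ)) := by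
  congr 1
  funext p
  have hA2 : ∑ i, ∑ α, A2 p i * (p.2 α / ‖p.2‖) * pdT u α p * pdX v i p
      = ∑ i, A2 p i * radD u p * pdX v i p := by
    simp only [radD, Finset.mul_sum, Finset.sum_mul]
    exact Finset.sum_congr rfl fun i _ => Finset.sum_congr rfl fun α _ => by ring
  have hA3 : ∑ α, ∑ k, (p.2 α / ‖p.2‖) * A3 p k * pdX u k p * pdT v α p
      = (∑ k, A3 p k * pdX u k p) * radD v p := by
    simp only [radD, Finset.mul_sum, Finset.sum_mul]
    exact Finset.sum_congr rfl fun α _ => Finset.sum_congr rfl fun k _ => by ring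
  have hb : ∑ i, ∑ j, b p * angD i j u p * angD i j v p
      = b p * ∑ i, ∑ j, angD i j u p * angD i j v p := by
    simp only [Finset.mul_sum, mul_assoc]
  rw [hA2, hA3, hb, sum_pdT_mul_pdT_eq_radD_add_angD v huΩ p]
  ring

/-- The operator `L = -div(|t|^{d+1-n} 𝒜 ∇)` with
`𝒜 = [[𝒜₁, 𝒜₂ t/|t|], [tᵀ/|t| 𝒜₃, b I]]` rewritten in cylindrical derivatives: for all
`u, v ∈ C_0^∞(Ω)` the bilinear form `∬ 𝒜∇u·∇v |t|^{d+1-n}` equals the corresponding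
bilinear form of
`-|t|^{d+1-n}[div_x(𝒜₁∇_x) + div_x(𝒜₂ ∂_r) + ∂_r(𝒜₃∇_x) + ∂_r(b ∂_r)
 + ½ ∑_{ij} ∂_{φ_{ij}}(b ∂_{φ_{ij}})]`. -/
theorem stmt_19 {d n : ℕ} (hd : 0 < d) (hdn : d < n)
    (A1 : EuclideanSpace ℝ (Fin d) × EuclideanSpace ℝ (Fin (n - d)) →
      Fin d → Fin d → ℝ)
    (A2 A3 : EuclideanSpace ℝ (Fin d) × EuclideanSpace ℝ (Fin (n - d)) → Fin d → ℝ)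
    (b : EuclideanSpace ℝ (Fin d) × EuclideanSpace ℝ (Fin (n - d)) → ℝ)
    (u v : EuclideanSpace ℝ (Fin d) × EuclideanSpace ℝ (Fin (n - d)) → ℝ)
    (hu : ContDiff ℝ (⊤ : ℕ∞) u) (hv : ContDiff ℝ (⊤ : ℕ∞) v)
    (huc : HasCompactSupport u) (hvc : HasCompactSupport v)
    (huΩ : tsupport u ⊆
      {p : EuclideanSpace ℝ (Fin d) × EuclideanSpace ℝ (Fin (n - d)) | p.2 ≠ 0})
    (hvΩ : tsupport v ⊆
      {p : EuclideanSpace ℝ (Fin d) × EuclideanSpace ℝ (Fin (n - d)) | p.2 ≠ 0}) :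
    (∫ p : EuclideanSpace ℝ (Fin d) × EuclideanSpace ℝ (Fin (n - d)),
        ((∑ i, ∑ k, A1 p i k * pdX u k p * pdX v i p)
          + (∑ i, ∑ α, A2 p i * (p.2 α / ‖p.2‖) * pdT u α p * pdX v i p)
          + (∑ α, ∑ k, (p.2 α / ‖p.2‖) * A3 p k * pdX u k p * pdT v α p)
          + b p * ∑ α, pdT u α p * pdT v α p)
          * ‖p.2‖ ^ ((d : ℤ) + 1 - (n : ℤ)))
      = ∫ p : EuclideanSpace ℝ (Fin d) × EuclideanSpace ℝ (Fin (n - d)),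
          ((∑ i, ∑ k, A1 p i k * pdX u k p * pdX v i p)
            + (∑ i, A2 p i * radD u p * pdX v i p)
            + (∑ k, A3 p k * pdX u k p) * radD v p
            + b p * (radD u p * radD v p)
            + (1 / 2) * ∑ i, ∑ j, b p * angD i j u p * angD i j v p)
            * ‖p.2‖ ^ ((d : ℤ) + 1 - (n : ℤ)) :=
  stmt_19_general A1 A2 A3 b u v huΩ

end
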